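/- arXiv:2305.16534 — 2 statements merged into one kernel-verified Lean document; each statement's English description precedes it below -/
import Mathlib

section
/- Let σ: ℝ → ℝ be positively homogeneous of degree one and let f_θ(x) = Σ_{k=1}^K v_k σ(w_kᵀx) with v_k ∈ ℝ^D, w_k ∈ ℝ^d. If {(v_k, w_k)}_k minimizes J(θ) = L(θ) + (λ/2)Σ_k(‖v_k‖₂² + ‖w_k‖₂²), where L(θ) depends on θ only through the function f_θ, then ‖v_k‖₂ = ‖w_k‖₂ for every k with (v_k, w_k) ≠ (0,0). -/
/-!
Rescaling a single neuron `(v k, w k) ↦ (γ • v k, γ⁻¹ • w k)` with `γ > 0` leaves the realized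
function unchanged, by positive homogeneity of `σ`, so at a minimizer of `J` the penalty term
`(γ ‖v k‖)² + (γ⁻¹ ‖w k‖)²` must be minimal at `γ = 1` among all `γ > 0`. Its derivative there,
`2 ‖v k‖² - 2 ‖w k‖²`, therefore vanishes.
-/

open scoped RealInnerProductSpace
open Function

theorem eq_of_forall_sq_add_sq_le_rescaled {a b : ℝ} (ha : 0 ≤ a) (hb : 0 ≤ b)
    (h : ∀ γ : ℝ, 0 < γ → a ^ 2 + b ^ 2 ≤ (γ * a) ^ 2 + (γ⁻¹ * b) ^ 2) : a = b := by
  have hmin : IsLocalMin (fun γ : ℝ => (γ * a) ^ 2 + (γ⁻¹ * b) ^ 2) 1 := by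
    filter_upwards [lt_mem_nhds one_pos] with γ hγ
    simpa using h γ hγ
  have hderiv : HasDerivAt (fun γ : ℝ => (γ * a) ^ 2 + (γ⁻¹ * b) ^ 2)
      (2 * a ^ 2 - 2 * b ^ 2) 1 := by
    refine ((((hasDerivAt_id' (1 : ℝ)).mul_const a).fun_pow 2).add
      (((hasDerivAt_inv one_ne_zero).mul_const b).fun_pow 2)).congr_deriv ?_
    norm_num
    ring
  have hcrit := hmin.hasDerivAt_eq_zero hderiv
  exact (sq_eq_sq₀ ha hb).mp (by linarith)

section
variable {ι E F : Type*} [Fintype ι] [DecidableEq ι]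

theorem shallow_network_rescale_neuron [AddCommGroup E] [Module ℝ E]
    [NormedAddCommGroup F] [InnerProductSpace ℝ F]
    {σ : ℝ → ℝ} (hσ : ∀ γ t : ℝ, 0 < γ → σ (γ * t) = γ * σ t)
    (v : ι → E) (w : ι → F) (k : ι) {γ : ℝ} (hγ : 0 < γ) :
    (fun x => ∑ j, σ ⟪update w k (γ⁻¹ • w k) j, x⟫ • update v k (γ • v k) j)
      = fun x => ∑ j, σ ⟪w j, x⟫ • v j := by
  funext x
  refine Finset.sum_congr rfl fun j _ => ?_
  rcases eq_or_ne j k with rfl | hj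
  · rw [update_self, update_self, real_inner_smul_left, hσ _ _ (inv_pos.mpr hγ), smul_smul,
      mul_right_comm, inv_mul_cancel₀ hγ.ne', one_mul]
  · rw [update_of_ne hj, update_of_ne hj]

theorem sum_sq_norm_rescale_neuron [SeminormedAddCommGroup E] [NormedSpace ℝ E]
    [SeminormedAddCommGroup F] [NormedSpace ℝ F]
    (v : ι → E) (w : ι → F) (k : ι) {γ : ℝ} (hγ : 0 < γ) :
    ∑ j, (‖update v k (γ • v k) j‖ ^ 2 + ‖update w k (γ⁻¹ • w k) j‖ ^ 2) + (‖v k‖ ^ 2 + ‖w k‖ ^ 2)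
      = ∑ j, (‖v j‖ ^ 2 + ‖w j‖ ^ 2) + ((γ * ‖v k‖) ^ 2 + (γ⁻¹ * ‖w k‖) ^ 2) := by
  simp_rw [apply_update₂ (fun _ x y => ‖x‖ ^ 2 + ‖y‖ ^ 2)]
  rw [Finset.sum_update_of_mem (Finset.mem_univ k),
    Finset.sum_eq_add_sum_sdiff_singleton_of_mem (Finset.mem_univ k), norm_smul, norm_smul, Real.norm_of_nonneg hγ.le, Real.norm_of_nonneg (inv_pos.mpr hγ).le]
  ring
end

/-- Neural Balance Theorem for shallow networks. -/
theorem neural_balance {d D K : ℕ} (σ : ℝ → ℝ)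
    (hσ : ∀ γ t : ℝ, 0 < γ → σ (γ * t) = γ * σ t)
    (L : (EuclideanSpace ℝ (Fin d) → EuclideanSpace ℝ (Fin D)) → ℝ)
    (lam : ℝ) (hlam : 0 < lam)
    (v : Fin K → EuclideanSpace ℝ (Fin D)) (w : Fin K → EuclideanSpace ℝ (Fin d))
    (hmin : ∀ (v' : Fin K → EuclideanSpace ℝ (Fin D)) (w' : Fin K → EuclideanSpace ℝ (Fin d)),
      L (fun x => ∑ k, σ ⟪w k, x⟫ • v k) + lam / 2 * ∑ k, (‖v k‖ ^ 2 + ‖w k‖ ^ 2)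
        ≤ L (fun x => ∑ k, σ ⟪w' k, x⟫ • v' k) + lam / 2 * ∑ k, (‖v' k‖ ^ 2 + ‖w' k‖ ^ 2)) :
    ∀ k : Fin K, (v k, w k) ≠ (0, 0) → ‖v k‖ = ‖w k‖ := by
  intro k _
  refine eq_of_forall_sq_add_sq_le_rescaled (norm_nonneg _) (norm_nonneg _) fun γ hγ => ?_
  have hJ := hmin (update v k (γ • v k)) (update w k (γ⁻¹ • w k))
  rw [shallow_network_rescale_neuron hσ v w k hγ] at hJ
  have hpen := sum_sq_norm_rescale_neuron v w k hγ
  nlinarith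
end

section
/- Let Ψ ∈ ℝ^{D×N} and Φ ∈ ℝ^{K×N} with rank(Φ) = r_Φ, rank(Ψ) = r_Ψ, row space of Ψ contained in row space of Φ, and K ≥ r_Ψ. Then there exists a minimizer V of Σ_{k=1}^K ‖v_k‖₂ subject to Ψ = VΦ having at most r_Φ·r_Ψ nonzero columns. -/
/-!
A minimizer exists because the objective is coercive, and projecting its columns orthogonally
onto the column space of `Ψ` keeps it feasible without increasing any column norm. Among the
minimizers with columns in that space take one with the fewest nonzero columns `v_k`. The
rank-one matrices `v_k φ_kᵀ` lie in a space of dimension at most `r_Ψ r_Φ`; if there were more of them,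
a dependence `∑ c_k v_k φ_kᵀ = 0` would let us rescale the columns to `(1 + t c_k) v_k` without
leaving the feasible set. The objective is affine in `t` near `0` and minimal at `0`, hence
constant up to the first `t` that kills a column — contradicting the minimality of the support.
-/

open Matrix

theorem Submodule.finrank_map₂_le {K M N P : Type*} [Field K] [AddCommGroup M]
    [AddCommGroup N] [AddCommGroup P] [Module K M] [Module K N] [Module K P]
    (f : M →ₗ[K] N →ₗ[K] P) (p : Submodule K M) (q : Submodule K N)
    [FiniteDimensional K p] [FiniteDimensional K q] :
    Module.finrank K (map₂ f p q) ≤ Module.finrank K p * Module.finrank K q := by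
  rw [TensorProduct.map₂_eq_range_lift_comp_mapIncl, ← Module.finrank_tensorProduct]
  exact LinearMap.finrank_range_le _

theorem Matrix.exists_mul_eq_of_span_range_le {R m n ι : Type*} [CommSemiring R] [Fintype ι]
    {Ψ : Matrix m n R} {Φ : Matrix ι n R}
    (h : Submodule.span R (Set.range Ψ) ≤ Submodule.span R (Set.range Φ)) :
    ∃ V : Matrix m ι R, Ψ = V * Φ := by
  choose C hC using fun i => (Submodule.mem_span_range_iff_exists_fun R).1
    (h (Submodule.subset_span ⟨i, rfl⟩))
  refine ⟨Matrix.of C, ?_⟩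
  ext i j
  simpa [mul_apply] using (congrFun (hC i) j).symm

theorem sum_abs_one_add_mul_mul_eq {ι : Type*} [Fintype ι] (w c : ι → ℝ) {t : ℝ}
    (h : ∀ k, |t * c k| ≤ 1) :
    ∑ k, |1 + t * c k| * w k = ∑ k, w k + t * ∑ k, c k * w k := by
  rw [Finset.mul_sum, ← Finset.sum_add_distrib]
  refine Finset.sum_congr rfl fun k _ => ?_
  rw [abs_of_nonneg (by linarith [neg_abs_le (t * c k), h k])]
  ring

theorem exists_sum_abs_one_add_mul_mul_eq {ι : Type*} [Fintype ι] (w c : ι → ℝ) (hc : c ≠ 0)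
    (hmin : ∀ t, ∑ k, w k ≤ ∑ k, |1 + t * c k| * w k) :
    ∃ t k₀, c k₀ ≠ 0 ∧ 1 + t * c k₀ = 0 ∧ ∑ k, |1 + t * c k| * w k = ∑ k, w k := by
  obtain ⟨k₁, hk₁⟩ := Function.ne_iff.1 hc
  have : Nonempty ι := ⟨k₁⟩
  obtain ⟨k₀, hk₀⟩ := Finite.exists_max fun k => |c k|
  have hck₀ : c k₀ ≠ 0 := abs_pos.1 ((abs_pos.2 hk₁).trans_le (hk₀ k₁))
  have hlin : ∀ t, |t| = |c k₀|⁻¹ →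
      ∑ k, |1 + t * c k| * w k = ∑ k, w k + t * ∑ k, c k * w k := fun t ht =>
    sum_abs_one_add_mul_mul_eq w c fun k => by
      rw [abs_mul, ht, inv_mul_le_iff₀ (abs_pos.2 hck₀), mul_one]
      exact hk₀ k
  have hslope : ∑ k, c k * w k = 0 := by
    have hpos := hmin |c k₀|⁻¹
    have hneg := hmin (-|c k₀|⁻¹)
    rw [hlin _ (abs_of_pos (by positivity))] at hpos
    rw [hlin _ (by rw [abs_neg, abs_of_pos (by positivity)])] at hneg
    have : 0 < |c k₀|⁻¹ := by positivity
    nlinarith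
  refine ⟨-(c k₀)⁻¹, k₀, hck₀, by field_simp; ring, ?_⟩
  rw [hlin _ (by rw [abs_neg, abs_inv]), hslope, mul_zero, add_zero]

namespace GroupLasso

variable {m n ι : Type*}

theorem col_mul_diagonal {R : Type*} [CommSemiring R] [Fintype ι] [DecidableEq ι]
    (V : Matrix m ι R) (α : ι → R) (k : ι) : (V * diagonal α).col k = α k • V.col k := by
  ext i; simp [mul_comm]

theorem mul_diagonal_mul_eq_sum_vecMulVec {R : Type*} [CommSemiring R] [Fintype ι]
    [DecidableEq ι] (V : Matrix m ι R) (c : ι → R) (Φ : Matrix ι n R) :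
    V * diagonal c * Φ = ∑ k, c k • vecMulVec (V.col k) (Φ k) := by
  ext i j
  rw [mul_apply]
  simp [mul_diagonal, Matrix.sum_apply, vecMulVec_apply]
  exact Finset.sum_congr rfl fun k _ => by ring

variable [Fintype m] [Fintype ι]

noncomputable def groupNorm (V : Matrix m ι ℝ) : ℝ := ∑ k, √(∑ i, V i k ^ 2)

noncomputable def colSupport (V : Matrix m ι ℝ) : Finset ι := {k | V.col k ≠ 0}

def IsSolution (Ψ : Matrix m n ℝ) (Φ : Matrix ι n ℝ) (V : Matrix m ι ℝ) : Prop :=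
  Ψ = V * Φ ∧ ∀ V', Ψ = V' * Φ → groupNorm V ≤ groupNorm V'

theorem groupNorm_eq_sum_norm (V : Matrix m ι ℝ) :
    groupNorm V = ∑ k, ‖WithLp.toLp 2 (V.col k)‖ := by
  simp [groupNorm, EuclideanSpace.norm_eq]

theorem groupNorm_mul_diagonal [DecidableEq ι] (V : Matrix m ι ℝ) (α : ι → ℝ) :
    groupNorm (V * diagonal α) = ∑ k, |α k| * ‖WithLp.toLp 2 (V.col k)‖ := by
  rw [groupNorm_eq_sum_norm]
  refine Finset.sum_congr rfl fun k _ => ?_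
  rw [col_mul_diagonal, WithLp.toLp_smul, norm_smul, Real.norm_eq_abs]

theorem continuous_groupNorm : Continuous (groupNorm : Matrix m ι ℝ → ℝ) := by
  unfold groupNorm; fun_prop

theorem abs_apply_le_groupNorm (V : Matrix m ι ℝ) (i : m) (k : ι) : |V i k| ≤ groupNorm V := by
  rw [groupNorm_eq_sum_norm]
  calc |V i k| = ‖(WithLp.toLp 2 (V.col k)) i‖ := rfl
    _ ≤ ‖WithLp.toLp 2 (V.col k)‖ := PiLp.norm_apply_le _ _
    _ ≤ _ := Finset.single_le_sum (f := fun k => ‖WithLp.toLp 2 (V.col k)‖)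
      (fun j _ => norm_nonneg _) (Finset.mem_univ k)

theorem isCompact_setOf_groupNorm_le (c : ℝ) :
    IsCompact {V : Matrix m ι ℝ | groupNorm V ≤ c} :=
  (isCompact_univ_pi fun _ => isCompact_univ_pi fun _ => isCompact_Icc).of_isClosed_subset
    (isClosed_le continuous_groupNorm continuous_const)
    fun V hV => Set.mem_univ_pi.2 fun i => Set.mem_univ_pi.2 fun k =>
      abs_le.1 ((abs_apply_le_groupNorm V i k).trans hV)

theorem exists_isSolution {Ψ : Matrix m n ℝ} {Φ : Matrix ι n ℝ} {V₀ : Matrix m ι ℝ}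
    (h₀ : Ψ = V₀ * Φ) : ∃ V, IsSolution Ψ Φ V := by
  have hclosed : IsClosed {V : Matrix m ι ℝ | Ψ = V * Φ} :=
    isClosed_eq continuous_const (continuous_id.matrix_mul continuous_const)
  have hV₀ : groupNorm V₀ ≤ groupNorm V₀ := le_rfl
  obtain ⟨V, ⟨-, hV⟩, hmin⟩ := ((isCompact_setOf_groupNorm_le (groupNorm V₀)).inter_right
    hclosed).exists_isMinOn ⟨V₀, hV₀, h₀⟩ continuous_groupNorm.continuousOn
  refine ⟨V, hV, fun V' hV' => ?_⟩
  rcases le_total (groupNorm V') (groupNorm V₀) with h | h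
  · exact hmin ⟨h, hV'⟩
  · exact (hmin ⟨hV₀, h₀⟩).trans h

theorem exists_projection_matrix [DecidableEq m] (U : Submodule ℝ (m → ℝ)) :
    ∃ P : Matrix m m ℝ, (∀ x ∈ U, P *ᵥ x = x) ∧ (∀ x, P *ᵥ x ∈ U) ∧
      ∀ x, ‖WithLp.toLp 2 (P *ᵥ x)‖ ≤ ‖WithLp.toLp 2 x‖ := by
  let e := WithLp.linearEquiv 2 ℝ (m → ℝ)
  let U' := U.comap e.toLinearMap
  refine ⟨LinearMap.toMatrix'
      (e.toLinearMap ∘ₗ U'.starProjection.toLinearMap ∘ₗ e.symm.toLinearMap),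
    fun x hx => ?_, fun x => ?_, fun x => ?_⟩ <;>
    simp only [LinearMap.toMatrix'_mulVec, LinearMap.coe_comp, Function.comp_apply,
      LinearEquiv.coe_coe, ContinuousLinearMap.coe_coe]
  · rw [U'.starProjection_eq_self_iff.2 (by simpa [U'] using hx)]
    exact e.apply_symm_apply x
  · exact U'.starProjection_apply_mem _
  · exact U'.norm_starProjection_apply_le _

theorem IsSolution.exists_col_mem [DecidableEq m] {Ψ : Matrix m n ℝ} {Φ : Matrix ι n ℝ}
    {V : Matrix m ι ℝ} (hV : IsSolution Ψ Φ V) {U : Submodule ℝ (m → ℝ)}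
    (hΨ : ∀ j, Ψ.col j ∈ U) : ∃ V', IsSolution Ψ Φ V' ∧ ∀ k, V'.col k ∈ U := by
  obtain ⟨P, hfix, hmem, hnorm⟩ := exists_projection_matrix U
  have hPΨ : P * Ψ = Ψ := by
    ext i j
    exact congrFun (hfix _ (hΨ j)) i
  have hfeas : Ψ = P * V * Φ := by rw [Matrix.mul_assoc, ← hV.1, hPΨ]
  refine ⟨P * V, ⟨hfeas, fun V' hV' => le_trans ?_ (hV.2 V' hV')⟩, fun k => hmem _⟩
  rw [groupNorm_eq_sum_norm, groupNorm_eq_sum_norm]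
  exact Finset.sum_le_sum fun k _ => hnorm _

theorem IsSolution.exists_card_colSupport_lt [DecidableEq ι] {Ψ : Matrix m n ℝ}
    {Φ : Matrix ι n ℝ} {V : Matrix m ι ℝ} (hV : IsSolution Ψ Φ V) {c : ι → ℝ} (hc : c ≠ 0)
    (hsupp : ∀ k, c k ≠ 0 → k ∈ colSupport V) (hker : V * diagonal c * Φ = 0) :
    ∃ α : ι → ℝ, IsSolution Ψ Φ (V * diagonal α) ∧
      (colSupport (V * diagonal α)).card < (colSupport V).card := by
  have hfeas : ∀ t : ℝ, Ψ = V * diagonal (fun k => 1 + t * c k) * Φ := fun t => by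
    have : diagonal (fun k => 1 + t * c k) = 1 + t • diagonal c := by
      rw [← diagonal_one, ← diagonal_smul, diagonal_add]; rfl
    rw [this, Matrix.mul_add, Matrix.add_mul, Matrix.mul_one, Matrix.mul_smul, Matrix.smul_mul,
      hker, smul_zero, add_zero, hV.1]
  obtain ⟨t, k₀, hck₀, hk₀, hnorm⟩ := exists_sum_abs_one_add_mul_mul_eq
    (fun k => ‖WithLp.toLp 2 (V.col k)‖) c hc fun t => by
      rw [← groupNorm_eq_sum_norm, ← groupNorm_mul_diagonal]; exact hV.2 _ (hfeas t)
  refine ⟨fun k => 1 + t * c k, ⟨hfeas t, fun V' hV' => ?_⟩, Finset.card_lt_card ?_⟩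
  · rw [groupNorm_mul_diagonal, hnorm, ← groupNorm_eq_sum_norm]
    exact hV.2 V' hV'
  · refine Finset.ssubset_of_subset_of_ssubset (fun k hk => ?_)
      (Finset.erase_ssubset (hsupp k₀ hck₀))
    simp only [colSupport, Finset.mem_filter, Finset.mem_univ, true_and,
      col_mul_diagonal] at hk
    refine Finset.mem_erase.2 ⟨?_, ?_⟩
    · rintro rfl; simp [hk₀] at hk
    · simp only [colSupport, Finset.mem_filter, Finset.mem_univ, true_and]
      rintro h; simp [h] at hk

theorem exists_mul_diagonal_mul_eq_zero [DecidableEq ι] [Finite n] {V : Matrix m ι ℝ}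
    {Φ : Matrix ι n ℝ} {U : Submodule ℝ (m → ℝ)} {R : Submodule ℝ (n → ℝ)}
    (hV : ∀ k, V.col k ∈ U) (hΦ : ∀ k, Φ k ∈ R)
    (hcard : Module.finrank ℝ U * Module.finrank ℝ R < (colSupport V).card) :
    ∃ c : ι → ℝ, c ≠ 0 ∧ (∀ k, c k ≠ 0 → k ∈ colSupport V) ∧ V * diagonal c * Φ = 0 := by
  set s := colSupport V
  let v : ι → Matrix m n ℝ := fun k => vecMulVec (V.col k) (Φ k)
  have hdep : ¬ LinearIndepOn ℝ v (s : Set ι) := fun hli => by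
    have hspan : Submodule.span ℝ (Set.range fun k : (s : Set ι) => v k) ≤
        Submodule.map₂ (vecMulVecBilin ℝ ℝ) U R :=
      Submodule.span_le.2 <| Set.range_subset_iff.2 fun k =>
        Submodule.apply_mem_map₂ _ (hV k) (hΦ k)
    have := (Submodule.finrank_mono hspan).trans (Submodule.finrank_map₂_le _ U R)
    rw [finrank_span_eq_card hli] at this
    simp only [Finset.coe_sort_coe, Fintype.card_coe] at this
    omega
  obtain ⟨f, hf, k₀, hk₀s, hk₀⟩ := not_linearIndepOn_finset_iff.1 hdep
  refine ⟨fun k => if k ∈ s then f k else 0, Function.ne_iff.2 ⟨k₀, by simpa [hk₀s]⟩,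
    fun k hk => by by_contra h; simp [h] at hk, ?_⟩
  rw [mul_diagonal_mul_eq_sum_vecMulVec]
  simp only [ite_smul, zero_smul, Finset.sum_ite_mem, Finset.univ_inter]
  exact hf

theorem exists_isSolution_card_colSupport_le [DecidableEq ι] [Finite n] {Ψ : Matrix m n ℝ}
    {Φ : Matrix ι n ℝ} {U : Submodule ℝ (m → ℝ)} {R : Submodule ℝ (n → ℝ)}
    (hsol : ∃ V, IsSolution Ψ Φ V ∧ ∀ k, V.col k ∈ U) (hΦ : ∀ k, Φ k ∈ R) :
    ∃ V, IsSolution Ψ Φ V ∧ (colSupport V).card ≤ Module.finrank ℝ U * Module.finrank ℝ R := by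
  obtain ⟨V, ⟨hV, hVU⟩, hmin⟩ :=
    exists_minimalFor_of_wellFoundedLT _ (fun V => (colSupport V).card) hsol
  refine ⟨V, hV, not_lt.1 fun hcard => ?_⟩
  obtain ⟨c, hc, hsupp, hker⟩ := exists_mul_diagonal_mul_eq_zero hVU hΦ hcard
  obtain ⟨α, hα, hlt⟩ := hV.exists_card_colSupport_lt hc hsupp hker
  have hαU : ∀ k, (V * diagonal α).col k ∈ U := fun k => by
    rw [col_mul_diagonal]; exact U.smul_mem _ (hVU k)
  exact hlt.not_ge (hmin ⟨hα, hαU⟩ hlt.le)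

end GroupLasso

open GroupLasso in
theorem multitask_lasso_sparsity_upper_general {D N K : ℕ} (rΦ rΨ : ℕ)
    (Ψ : Matrix (Fin D) (Fin N) ℝ) (Φ : Matrix (Fin K) (Fin N) ℝ)
    (hΦ : Φ.rank = rΦ) (hΨ : Ψ.rank = rΨ)
    (hrow : Submodule.span ℝ (Set.range Ψ) ≤ Submodule.span ℝ (Set.range Φ)) :
    ∃ V : Matrix (Fin D) (Fin K) ℝ,
      Ψ = V * Φ ∧
      (∀ V' : Matrix (Fin D) (Fin K) ℝ, Ψ = V' * Φ →
        ∑ k, Real.sqrt (∑ i, (V i k) ^ 2) ≤ ∑ k, Real.sqrt (∑ i, (V' i k) ^ 2)) ∧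
      (@Finset.filter _ (fun k => Vᵀ k ≠ 0) (fun _ => inferInstance) Finset.univ).card ≤ rΦ * rΨ := by
  obtain ⟨V₀, hV₀⟩ := Matrix.exists_mul_eq_of_span_range_le hrow
  obtain ⟨V₁, hV₁⟩ := exists_isSolution hV₀
  obtain ⟨V, ⟨hfeas, hmin⟩, hcard⟩ := exists_isSolution_card_colSupport_le
    (hV₁.exists_col_mem (U := Submodule.span ℝ (Set.range Ψ.col)) fun j =>
      Submodule.subset_span ⟨j, rfl⟩)
    (R := Submodule.span ℝ (Set.range Φ.row)) fun k => Submodule.subset_span ⟨k, rfl⟩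
  rw [← rank_eq_finrank_span_cols, ← rank_eq_finrank_span_row, hΨ, hΦ, mul_comm] at hcard
  exact ⟨V, hfeas, hmin, hcard⟩

theorem multitask_lasso_sparsity_upper {D N K : ℕ} (rΦ rΨ : ℕ)
    (Ψ : Matrix (Fin D) (Fin N) ℝ) (Φ : Matrix (Fin K) (Fin N) ℝ)
    (hΦ : Φ.rank = rΦ) (hΨ : Ψ.rank = rΨ)
    (hrow : Submodule.span ℝ (Set.range Ψ) ≤ Submodule.span ℝ (Set.range Φ))
    (hK : rΨ ≤ K) :
    ∃ V : Matrix (Fin D) (Fin K) ℝ,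
      Ψ = V * Φ ∧
      (∀ V' : Matrix (Fin D) (Fin K) ℝ, Ψ = V' * Φ →
        ∑ k, Real.sqrt (∑ i, (V i k) ^ 2) ≤ ∑ k, Real.sqrt (∑ i, (V' i k) ^ 2)) ∧
      (@Finset.filter _ (fun k => Vᵀ k ≠ 0) (fun _ => inferInstance) Finset.univ).card ≤ rΦ * rΨ :=
  multitask_lasso_sparsity_upper_general rΦ rΨ Ψ Φ hΦ hΨ hrow
end
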